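/- Let (ξ_n)_{n∈ℤ} be an arbitrary real sequence and set v_n = ξ_{n+1} − ξ_n. Let R = [[0, −1], [1, 0]], P_a = [[1, a], [0, 1]], and R_a = P_a R P_a^{−1} = [[a, −a²−1], [1, −a]]. Then for every n ≥ 1, the transfer matrix at energy E = 0 satisfies T_{n,0} = Π_{n,0} ⋯ Π_{1,0} = P_{−ξ_{n+1}} · R_{ξ_n} R_{ξ_{n−1}} ⋯ R_{ξ_1} · P_{ξ_1}, where Π_{j,0} = [[−v_j, −1], [1, 0]]. -/
import Mathlib


noncomputable section

/-- `R = [[0, -1], [1, 0]]`. -/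
def Rmat : Matrix (Fin 2) (Fin 2) ℝ := !![0, -1; 1, 0]

/-- `P_a = [[1, a], [0, 1]]`. -/
def Pmat (a : ℝ) : Matrix (Fin 2) (Fin 2) ℝ := !![1, a; 0, 1]

/-- `R_a = P_a R P_a⁻¹ = [[a, -a² - 1], [1, -a]]`. -/
def Rconj (a : ℝ) : Matrix (Fin 2) (Fin 2) ℝ := !![a, -a ^ 2 - 1; 1, -a]

/-- The one-step transfer matrix at energy `0`: `Π_{j,0} = [[-v_j, -1], [1, 0]]`
for the potential `v_j = ξ_{j+1} - ξ_j`. -/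
def stepMat (ξ : ℤ → ℝ) (j : ℤ) : Matrix (Fin 2) (Fin 2) ℝ :=
  !![-(ξ (j + 1) - ξ j), -1; 1, 0]

/-- `T_{n,0} = Π_{n,0} ⋯ Π_{1,0}`. -/
def transfer0 (ξ : ℤ → ℝ) : ℕ → Matrix (Fin 2) (Fin 2) ℝ
  | 0 => 1
  | n + 1 => stepMat ξ ((n : ℤ) + 1) * transfer0 ξ n

/-- The product `R_{ξ_n} R_{ξ_{n-1}} ⋯ R_{ξ_1}`. -/
def Rprod (ξ : ℤ → ℝ) : ℕ → Matrix (Fin 2) (Fin 2) ℝ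
  | 0 => 1
  | n + 1 => Rconj (ξ ((n : ℤ) + 1)) * Rprod ξ n


lemma step_eq (ξ : ℤ → ℝ) (j : ℤ) :
    stepMat ξ j = Pmat (-ξ (j + 1)) * Rconj (ξ j) * Pmat (ξ j) := by
  simp only [stepMat, Pmat, Rconj]
  ext i k
  fin_cases i <;> fin_cases k <;>
    simp [Matrix.mul_apply, Fin.sum_univ_two] <;> ring

lemma Pmat_mul_neg (a : ℝ) : Pmat a * Pmat (-a) = 1 := by
  simp only [Pmat]
  ext i k
  fin_cases i <;> fin_cases k <;>
    simp [Matrix.mul_apply, Fin.sum_univ_two, Matrix.one_apply]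

lemma fact_all (ξ : ℤ → ℝ) (n : ℕ) :
    transfer0 ξ n = Pmat (-ξ ((n : ℤ) + 1)) * Rprod ξ n * Pmat (ξ 1) := by
  induction n with
  | zero =>
      have h := Pmat_mul_neg (-ξ 1)
      rw [neg_neg] at h
      simp [transfer0, Rprod, h]
  | succ n ih =>
      show stepMat ξ ((n : ℤ) + 1) * transfer0 ξ n = _
      rw [step_eq, ih]
      have key : Pmat (ξ ((n : ℤ) + 1)) * Pmat (-ξ ((n : ℤ) + 1)) = 1 := Pmat_mul_neg _
      simp only [Rprod]
      push_cast
      rw [mul_assoc (Pmat (-ξ ((n : ℤ) + 1 + 1)) * Rconj (ξ ((n : ℤ) + 1))),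
        ← mul_assoc (Pmat (ξ ((n : ℤ) + 1))), ← mul_assoc (Pmat (ξ ((n : ℤ) + 1))),
        key, one_mul]
      noncomm_ring

/-- equation (6.3): the factorization
`T_{n,0} = P_{-ξ_{n+1}} · R_{ξ_n} ⋯ R_{ξ_1} · P_{ξ_1}`. -/
theorem transfer_factorization (ξ : ℤ → ℝ) (n : ℕ) (hn : 1 ≤ n) :
    transfer0 ξ n = Pmat (-ξ ((n : ℤ) + 1)) * Rprod ξ n * Pmat (ξ 1) := by
  exact fact_all ξ n

end
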